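/- The upper tail dependence coefficient of the extreme-value copula C̄^{MGL-EV}(u_1,u_2;δ) = exp[ log(u_1 u_2) A_δ( log(u_2)/log(u_1 u_2) ) ] equals λ_u = 2 − 2 A_δ(1/2) = 2 − 2 I_{1/2, 1/δ + 1/2}(1/2), which coincides with the lower tail dependence coefficient of the MGL copula with the same parameter δ. -/

import Mathlib

open Real MeasureTheory Filter

/-- Beta function as an integral. -/
noncomputable def betaFn (m n : ℝ) : ℝ := ∫ t in (0:ℝ)..1, t ^ (m - 1) * (1 - t) ^ (n - 1)

/-- Regularized incomplete Beta function. -/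
noncomputable def regIncBeta (m n x : ℝ) : ℝ :=
  (∫ t in (0:ℝ)..x, t ^ (m - 1) * (1 - t) ^ (n - 1)) / betaFn m n

/-- The Pickands dependence function of the MGL-EV copula. -/
noncomputable def pickandsA (δ w : ℝ) : ℝ :=
  w * regIncBeta (1/2) (1/δ + 1/2)
      ((1 - w) ^ (-δ) / ((1 - w) ^ (-δ) + w ^ (-δ))) +
  (1 - w) * regIncBeta (1/2) (1/δ + 1/2)
      (w ^ (-δ) / ((1 - w) ^ (-δ) + w ^ (-δ)))

/-- The MGL-EV extreme-value copula built from the Pickands function A_δ. -/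
noncomputable def mglEvCopula (δ u₁ u₂ : ℝ) : ℝ :=
  Real.exp (Real.log (u₁ * u₂) * pickandsA δ (Real.log u₂ / Real.log (u₁ * u₂)))

/-- The upper tail dependence coefficient of the MGL-EV copula equals
2 − 2A_δ(1/2) = 2 − 2 I_{1/2,1/δ+1/2}(1/2). -/
theorem mgl_ev_upper_tail_dependence (δ : ℝ) (hδ : 0 < δ) :
    Tendsto (fun u : ℝ => (1 - 2 * u + mglEvCopula δ u u) / (1 - u))
      (nhdsWithin 1 (Set.Iio 1)) (nhds (2 - 2 * pickandsA δ (1/2))) ∧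
    2 - 2 * pickandsA δ (1/2) = 2 - 2 * regIncBeta (1/2) (1/δ + 1/2) (1/2) := by
  constructor
  · set A := pickandsA δ (1/2) with hA
    have hderiv : HasDerivAt (fun u : ℝ => 1 - 2*u + u ^ (2*A)) (-2 + 2*A) 1 := by
      have h1 : HasDerivAt (fun u : ℝ => u ^ (2*A)) (2*A * (1:ℝ) ^ (2*A - 1)) 1 :=
        Real.hasDerivAt_rpow_const (Or.inl one_ne_zero)
      have h2 : HasDerivAt (fun u : ℝ => 1 - 2*u) (-2) 1 := by
        simpa using ((hasDerivAt_id (1:ℝ)).const_mul 2).const_sub 1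
      have := h2.add h1
      rw [Real.one_rpow, mul_one] at this; exact this
    have hslope := hasDerivAt_iff_tendsto_slope.mp hderiv
    have hslope' : Tendsto (slope (fun u : ℝ => 1 - 2*u + u ^ (2*A)) 1)
        (nhdsWithin 1 (Set.Iio 1)) (nhds (-2 + 2*A)) :=
      hslope.mono_left (nhdsWithin_mono 1 (fun x hx => ne_of_lt hx))
    have hneg : Tendsto (fun u => -(slope (fun u : ℝ => 1 - 2*u + u ^ (2*A)) 1 u))
        (nhdsWithin 1 (Set.Iio 1)) (nhds (2 - 2*A)) := by
      have := hslope'.neg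
      rwa [show -(-2 + 2*A) = 2 - 2*A by ring] at this
    refine hneg.congr' ?_
    have hmem : Set.Ioo (0:ℝ) 1 ∈ nhdsWithin (1:ℝ) (Set.Iio 1) :=
      Ioo_mem_nhdsLT_of_mem (by norm_num : (1:ℝ) ∈ Set.Ioc (0:ℝ) 1)
    filter_upwards [hmem] with u hu
    obtain ⟨hu0, hu1⟩ := hu
    have hcop : mglEvCopula δ u u = u ^ (2*A) := by
      unfold mglEvCopula
      have hlogne : Real.log u ≠ 0 := ne_of_lt (Real.log_neg hu0 hu1)
      have hmul : Real.log (u * u) = 2 * Real.log u := by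
        rw [Real.log_mul (ne_of_gt hu0) (ne_of_gt hu0)]; ring
      rw [hmul]
      have hdiv : Real.log u / (2 * Real.log u) = 1/2 := by
        field_simp
      rw [hdiv, Real.rpow_def_of_pos hu0, ← hA]
      ring_nf
    have hune : u - 1 ≠ 0 := sub_ne_zero.mpr (ne_of_lt hu1)
    have h1u : (1:ℝ) - u ≠ 0 := sub_ne_zero.mpr (ne_of_gt hu1)
    rw [hcop, slope_def_field, Real.one_rpow]
    field_simp
    ring
  · have hx : (0:ℝ) < ((1:ℝ)/2) ^ (-δ) := Real.rpow_pos_of_pos (by norm_num) _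
    have h1 : (1:ℝ) - 1/2 = 1/2 := by norm_num
    have hhalf : ((1:ℝ)/2) ^ (-δ) / (((1:ℝ)/2) ^ (-δ) + ((1:ℝ)/2) ^ (-δ)) = 1/2 := by
      rw [div_eq_iff (by positivity)]; ring
    unfold pickandsA
    rw [h1, hhalf]
    ring
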